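/- arXiv:1308.2457 — 4 statements merged into one kernel-verified Lean document; each statement's English description precedes it below -/
import Mathlib

section
/- (Mean value theorem for tangent cones) Let γ:[a,b]→ℝ² be a simple arc-length parameterized curve whose derivative is piecewise continuous on (a,b) except possibly at finitely many points, and whose image has no cusps. Then there exists c ∈ (a,b) such that either γ(b)−γ(a) or −(γ(b)−γ(a)) lies in the tangent cone T_γ(c). -/
open Metric Set Filter RealInnerProductSpace

noncomputable section

/-- The tangent cone of a piecewise `C¹` curve at a parameter `s`:
all nontrivial nonnegative combinations of the one-sided limits of the derivative. -/
def TanCone (γ : ℝ → EuclideanSpace ℝ (Fin 2)) (s : ℝ) : Set (EuclideanSpace ℝ (Fin 2)) :=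
  {w | ∃ Γm Γp : EuclideanSpace ℝ (Fin 2),
      Tendsto (deriv γ) (nhdsWithin s (Set.Iio s)) (nhds Γm) ∧
      Tendsto (deriv γ) (nhdsWithin s (Set.Ioi s)) (nhds Γp) ∧
      ∃ a b : ℝ, 0 ≤ a ∧ 0 ≤ b ∧ 0 < a + b ∧ w = a • Γm + b • Γp}

/-- Tangent-cone graph-like at the point `γ s` with radius `r`. -/
def TCGLAt (Ω : Set (EuclideanSpace ℝ (Fin 2))) (γ : ℝ → EuclideanSpace ℝ (Fin 2))
    (r s : ℝ) : Prop :=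
  ∀ w ∈ TanCone γ s, ∀ u ∈ frontier Ω ∩ closedBall (γ s) r,
    ∀ v ∈ frontier Ω ∩ closedBall (γ s) r, u ≠ v → ⟪w, u - v⟫ ≠ 0


/-!
Let `d = γ b - γ a`, which is nonzero since `γ` is injective, and pick `n ≠ 0` orthogonal to `d`.
Then `t ↦ ⟪n, γ t⟫` takes the same value at `a` and `b`, so by Rolle it has a local extremum at
some `c ∈ (a, b)`; replacing `n` by `-n` we may assume it is a maximum. Since `γ'` has one-sided
limits `Γ⁻`, `Γ⁺` at `c`, these are the one-sided derivatives of `γ` at `c`, whence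
`⟪n, Γ⁻⟫ ≥ 0 ≥ ⟪n, Γ⁺⟫`. Some nontrivial nonnegative combination `w` of `Γ⁻` and `Γ⁺` is then
orthogonal to `n`, hence a multiple of `d` (we are in the plane), and `w ≠ 0` because `Γ⁻` and
`Γ⁺` are unit vectors that are not opposite. Rescaling `w` gives `d` or `-d` in the cone.
-/

open Topology

theorem IsLocalMax.hasDerivWithinAt_Ici_nonpos {f : ℝ → ℝ} {a f' : ℝ} (h : IsLocalMax f a)
    (hf : HasDerivWithinAt f f' (Ici a) a) : f' ≤ 0 := by
  have hslope := hasDerivWithinAt_iff_tendsto_slope.1 hf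
  rw [Ici_sdiff_left] at hslope
  refine le_of_tendsto hslope ?_
  filter_upwards [self_mem_nhdsWithin, h.filter_mono nhdsWithin_le_nhds] with x hx hfx
  rw [slope_def_field]
  exact div_nonpos_of_nonpos_of_nonneg (sub_nonpos.2 hfx) (sub_nonneg.2 (le_of_lt hx))

theorem IsLocalMax.hasDerivWithinAt_Iic_nonneg {f : ℝ → ℝ} {a f' : ℝ} (h : IsLocalMax f a)
    (hf : HasDerivWithinAt f f' (Iic a) a) : 0 ≤ f' := by
  have hslope := hasDerivWithinAt_iff_tendsto_slope.1 hf
  rw [Iic_sdiff_right] at hslope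
  refine ge_of_tendsto hslope ?_
  filter_upwards [self_mem_nhdsWithin, h.filter_mono nhdsWithin_le_nhds] with x hx hfx
  rw [slope_def_field]
  exact div_nonneg_of_nonpos (sub_nonpos.2 hfx) (sub_nonpos.2 (le_of_lt hx))

theorem norm_eq_of_tendsto_of_eventually_norm_eq {α E : Type*} [SeminormedAddCommGroup E]
    {l : Filter α} [l.NeBot] {f : α → E} {x : E} {r : ℝ} (hf : Tendsto f l (𝓝 x))
    (hr : ∀ᶠ t in l, ‖f t‖ = r) : ‖x‖ = r :=
  tendsto_nhds_unique hf.norm (tendsto_const_nhds.congr' (hr.mono fun _ => Eq.symm))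

theorem exists_nonneg_mul_add_mul_eq_zero {x y : ℝ} (hx : 0 ≤ x) (hy : y ≤ 0) :
    ∃ A B : ℝ, 0 ≤ A ∧ 0 ≤ B ∧ 0 < A + B ∧ A * x + B * y = 0 := by
  rcases (sub_nonneg.2 (hy.trans hx)).eq_or_lt with hxy | hxy
  · exact ⟨1, 0, zero_le_one, le_rfl, by norm_num, by linarith⟩
  · exact ⟨-y, x, by linarith, hx, by linarith, by ring⟩

theorem smul_add_smul_ne_zero_of_norm_eq {E : Type*} [NormedAddCommGroup E] [NormedSpace ℝ E]
    {u v : E} (huv : ‖u‖ = ‖v‖) (hne : v ≠ -u) {A B : ℝ} (hA : 0 ≤ A) (hB : 0 ≤ B)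
    (hAB : 0 < A + B) : A • u + B • v ≠ 0 := by
  intro h
  have hAu : A • u = -(B • v) := eq_neg_of_add_eq_zero_left h
  have hu : u ≠ 0 := by
    rintro rfl
    exact hne (by simpa [eq_comm] using huv)
  have hnorm : A * ‖u‖ = B * ‖u‖ := by
    simpa [norm_smul, abs_of_nonneg hA, abs_of_nonneg hB, ← huv] using congrArg norm hAu
  have hBA : B = A := (mul_right_cancel₀ (norm_ne_zero_iff.2 hu) hnorm).symm
  subst hBA
  refine hne (smul_right_injective E (by linarith : B ≠ 0) ?_)
  simp [smul_neg, hAu]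

theorem exists_ne_zero_inner_eq_zero {E : Type*} [NormedAddCommGroup E] [InnerProductSpace ℝ E]
    [Fact (Module.finrank ℝ E = 2)] {d : E} (hd : d ≠ 0) : ∃ n : E, n ≠ 0 ∧ ⟪n, d⟫ = 0 := by
  have hrank : Module.finrank ℝ (ℝ ∙ d)ᗮ = 1 :=
    Submodule.finrank_orthogonal_span_singleton hd
  have hne : (ℝ ∙ d)ᗮ ≠ ⊥ := fun h => by
    rw [h, finrank_bot] at hrank
    exact zero_ne_one hrank
  obtain ⟨n, hn, hn0⟩ := Submodule.exists_mem_ne_zero_of_ne_bot hne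
  exact ⟨n, hn0, real_inner_comm n d ▸ Submodule.mem_orthogonal_singleton_iff_inner_right.1 hn⟩

local notation "E2" => EuclideanSpace ℝ (Fin 2)

theorem smul_mem_tanCone {γ : ℝ → E2} {s r : ℝ} {w : E2} (hr : 0 < r) (hw : w ∈ TanCone γ s) :
    r • w ∈ TanCone γ s := by
  obtain ⟨Γm, Γp, hΓm, hΓp, A, B, hA, hB, hAB, rfl⟩ := hw
  refine ⟨Γm, Γp, hΓm, hΓp, r * A, r * B, by positivity, by positivity, ?_, ?_⟩
  · rw [← mul_add]; positivity
  · rw [smul_add, smul_smul, smul_smul]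

theorem mem_tanCone_or_neg_mem_of_smul_mem {γ : ℝ → E2} {s t : ℝ} {d : E2}
    (hd : t • d ∈ TanCone γ s) (ht : t ≠ 0) : d ∈ TanCone γ s ∨ -d ∈ TanCone γ s := by
  rcases ht.lt_or_gt with ht | ht
  · right
    simpa [smul_smul, ht.ne] using smul_mem_tanCone (neg_pos.2 (inv_lt_zero.2 ht)) hd
  · left
    simpa [smul_smul, ht.ne'] using smul_mem_tanCone (inv_pos.2 ht) hd

theorem exists_mem_tanCone_ne_zero_inner_eq_zero {γ : ℝ → E2} {c : ℝ} {m Γm Γp : E2}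
    (hmax : IsLocalMax (fun t => ⟪m, γ t⟫) c)
    (hΓm : Tendsto (deriv γ) (𝓝[<] c) (𝓝 Γm)) (hΓp : Tendsto (deriv γ) (𝓝[>] c) (𝓝 Γp))
    (hγm : HasDerivWithinAt γ Γm (Iic c) c) (hγp : HasDerivWithinAt γ Γp (Ici c) c)
    (hnorm : ‖Γm‖ = ‖Γp‖) (hcusp : Γp ≠ -Γm) :
    ∃ w ∈ TanCone γ c, w ≠ 0 ∧ ⟪m, w⟫ = 0 := by
  have hm : 0 ≤ ⟪m, Γm⟫ :=
    hmax.hasDerivWithinAt_Iic_nonneg (by simpa using (hasDerivWithinAt_const c _ m).inner ℝ hγm)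
  have hp : ⟪m, Γp⟫ ≤ 0 :=
    hmax.hasDerivWithinAt_Ici_nonpos (by simpa using (hasDerivWithinAt_const c _ m).inner ℝ hγp)
  obtain ⟨A, B, hA, hB, hAB, hzero⟩ := exists_nonneg_mul_add_mul_eq_zero hm hp
  refine ⟨A • Γm + B • Γp, ⟨Γm, Γp, hΓm, hΓp, A, B, hA, hB, hAB, rfl⟩,
    smul_add_smul_ne_zero_of_norm_eq hnorm hcusp hA hB hAB, ?_⟩
  simpa [inner_add_right, real_inner_smul_right] using hzero

theorem exists_mem_tanCone_ne_zero_inner_eq_zero_of_isLocalExtr {γ : ℝ → E2} {c : ℝ}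
    {G : Set ℝ} {m Γm Γp : E2} (hG : G ∈ 𝓝[≠] c) (hdiff : DifferentiableOn ℝ γ G)
    (hcont : ContinuousAt γ c) (hunit : ∀ t ∈ G, ‖deriv γ t‖ = 1)
    (hextr : IsLocalExtr (fun t => ⟪m, γ t⟫) c)
    (hΓm : Tendsto (deriv γ) (𝓝[<] c) (𝓝 Γm)) (hΓp : Tendsto (deriv γ) (𝓝[>] c) (𝓝 Γp))
    (hcusp : Γp ≠ -Γm) :
    ∃ w ∈ TanCone γ c, w ≠ 0 ∧ ⟪m, w⟫ = 0 := by
  have hunit_near : ∀ᶠ t in 𝓝[≠] c, ‖deriv γ t‖ = 1 := Filter.mem_of_superset hG hunit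
  have hnorm : ‖Γm‖ = ‖Γp‖ := by
    rw [norm_eq_of_tendsto_of_eventually_norm_eq hΓm (hunit_near.filter_mono (nhdsLT_le_nhdsNE c)),
      norm_eq_of_tendsto_of_eventually_norm_eq hΓp (hunit_near.filter_mono (nhdsGT_le_nhdsNE c))]
  have hcone : ∀ m : E2, IsLocalMax (fun t => ⟪m, γ t⟫) c →
      ∃ w ∈ TanCone γ c, w ≠ 0 ∧ ⟪m, w⟫ = 0 := fun m hmax =>
    exists_mem_tanCone_ne_zero_inner_eq_zero hmax hΓm hΓp
      (hasDerivWithinAt_Iic_of_tendsto_deriv hdiff hcont.continuousWithinAt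
        (nhdsLT_le_nhdsNE c hG) hΓm)
      (hasDerivWithinAt_Ici_of_tendsto_deriv hdiff hcont.continuousWithinAt
        (nhdsGT_le_nhdsNE c hG) hΓp)
      hnorm hcusp
  rcases hextr with hmin | hmax
  · obtain ⟨w, hw, hw0, hwm⟩ := hcone (-m) (by simpa [inner_neg_left] using IsLocalMin.neg hmin)
    exact ⟨w, hw, hw0, by simpa [inner_neg_left] using hwm⟩
  · exact hcone m hmax

theorem statement5_general
    (a b : ℝ) (hab : a < b)
    (γ : ℝ → EuclideanSpace ℝ (Fin 2))
    (hcont : ContinuousOn γ (Set.Icc a b))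
    (hsimple : Set.InjOn γ (Set.Icc a b))
    -- γ' is piecewise continuous on (a,b) except at finitely many points,
    -- and γ is arc-length parameterized:
    (F : Finset ℝ)
    (hdiff : ∀ t ∈ Set.Ioo a b, t ∉ F → DifferentiableAt ℝ γ t)
    (harc : ∀ t ∈ Set.Ioo a b, t ∉ F → ‖deriv γ t‖ = 1)
    -- one-sided derivative limits exist everywhere in (a,b):
    (hlim : ∀ c ∈ Set.Ioo a b, ∃ Γm Γp : EuclideanSpace ℝ (Fin 2),
      Tendsto (deriv γ) (nhdsWithin c (Set.Iio c)) (nhds Γm) ∧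
      Tendsto (deriv γ) (nhdsWithin c (Set.Ioi c)) (nhds Γp))
    -- the image of γ has no cusps:
    (hnocusp : ∀ c ∈ Set.Ioo a b, ∀ Γm Γp : EuclideanSpace ℝ (Fin 2),
      Tendsto (deriv γ) (nhdsWithin c (Set.Iio c)) (nhds Γm) →
      Tendsto (deriv γ) (nhdsWithin c (Set.Ioi c)) (nhds Γp) →
      Γp ≠ -Γm) :
    ∃ c ∈ Set.Ioo a b,
      (γ b - γ a) ∈ TanCone γ c ∨ -(γ b - γ a) ∈ TanCone γ c := by
  have hd : γ b - γ a ≠ 0 := sub_ne_zero.2 fun h =>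
    hab.ne' (hsimple (right_mem_Icc.2 hab.le) (left_mem_Icc.2 hab.le) h)
  have : Fact (Module.finrank ℝ E2 = 2) := ⟨finrank_euclideanSpace_fin⟩
  obtain ⟨n, hn0, hnd⟩ := exists_ne_zero_inner_eq_zero hd
  have hends : ⟪n, γ a⟫ = ⟪n, γ b⟫ := by
    rw [inner_sub_right, sub_eq_zero] at hnd
    exact hnd.symm
  obtain ⟨c, hc, hextr⟩ := exists_isLocalExtr_Ioo hab (continuousOn_const.inner hcont) hends
  obtain ⟨Γm, Γp, hΓm, hΓp⟩ := hlim c hc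
  have hgood : Ioo a b \ F ∈ 𝓝[≠] c :=
    nhdsNE_of_nhdsNE_sdiff_finite (mem_nhdsWithin_of_mem_nhds (isOpen_Ioo.mem_nhds hc))
      inferInstance
  obtain ⟨w, hw, hw0, hwn⟩ := exists_mem_tanCone_ne_zero_inner_eq_zero_of_isLocalExtr hgood
    (fun t ht => (hdiff t ht.1 ht.2).differentiableWithinAt)
    (hcont.continuousAt (Icc_mem_nhds hc.1 hc.2)) (fun t ht => harc t ht.1 ht.2) hextr hΓm hΓp
    (hnocusp c hc Γm Γp hΓm hΓp)
  obtain ⟨t, rfl⟩ := Submodule.mem_span_singleton.1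
    (Submodule.mem_span_singleton_of_inner_eq_zero_of_inner_eq_zero hn0 hd hwn hnd)
  exact ⟨c, hc, mem_tanCone_or_neg_mem_of_smul_mem hw (left_ne_zero_of_smul hw0)⟩

/-- Mean value theorem for tangent cones. -/
theorem statement5
    (a b : ℝ) (hab : a < b)
    (γ : ℝ → EuclideanSpace ℝ (Fin 2))
    (hcont : ContinuousOn γ (Set.Icc a b))
    (hsimple : Set.InjOn γ (Set.Icc a b))
    -- γ' is piecewise continuous on (a,b) except at finitely many points,
    -- and γ is arc-length parameterized:
    (F : Finset ℝ)
    (hdiff : ∀ t ∈ Set.Ioo a b, t ∉ F → DifferentiableAt ℝ γ t)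
    (hderivcont : ContinuousOn (deriv γ) (Set.Ioo a b \ F))
    (harc : ∀ t ∈ Set.Ioo a b, t ∉ F → ‖deriv γ t‖ = 1)
    -- one-sided derivative limits exist everywhere in (a,b):
    (hlim : ∀ c ∈ Set.Ioo a b, ∃ Γm Γp : EuclideanSpace ℝ (Fin 2),
      Tendsto (deriv γ) (nhdsWithin c (Set.Iio c)) (nhds Γm) ∧
      Tendsto (deriv γ) (nhdsWithin c (Set.Ioi c)) (nhds Γp))
    -- the image of γ has no cusps:
    (hnocusp : ∀ c ∈ Set.Ioo a b, ∀ Γm Γp : EuclideanSpace ℝ (Fin 2),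
      Tendsto (deriv γ) (nhdsWithin c (Set.Iio c)) (nhds Γm) →
      Tendsto (deriv γ) (nhdsWithin c (Set.Ioi c)) (nhds Γp) →
      Γp ≠ -Γm) :
    ∃ c ∈ Set.Ioo a b,
      (γ b - γ a) ∈ TanCone γ c ∨ -(γ b - γ a) ∈ TanCone γ c :=
  statement5_general a b hab γ hcont hsimple F hdiff harc hlim hnocusp
end
end

section
/- Suppose ∂Ω is tangent-cone graph-like with radius r and P is a boundary arc between two points at Euclidean distance less than r such that all pairs of points of P are within distance less than r of each other. Then for any q₁, q₂ ∈ P, the arc length along P between q₁ and q₂ is at most √2 times the Euclidean distance d(q₁,q₂). -/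
open Metric Set Filter RealInnerProductSpace

noncomputable section

/-!
Wherever `γ` is differentiable at `s`, its unit tangent `γ' s` lies in the tangent cone at `γ s`,
so the graph-like condition makes `t ↦ ⟪γ' s, γ t⟫` injective, hence strictly monotone, on the arc;
its derivative `⟪γ' s, γ' t⟫` is therefore nonnegative. Unit vectors of the plane at pairwise
non-obtuse angles lie within angle `π / 4` of a common unit vector `e`, so `√2 ⟪e, γ t⟫ - t` is
nondecreasing along the arc, and `u₂ - u₁ ≤ √2 ⟪e, γ u₂ - γ u₁⟫ ≤ √2 ‖γ u₂ - γ u₁‖`.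
-/

open scoped Topology

lemma monotoneOn_of_deriv_nonneg_off_finset {f : ℝ → ℝ} (F : Finset ℝ) {a b : ℝ}
    (hf : ContinuousOn f (Icc a b)) (hd : ∀ x ∈ Ioo a b \ F, DifferentiableAt ℝ f x)
    (hf' : ∀ x ∈ Ioo a b \ F, 0 ≤ deriv f x) : MonotoneOn f (Icc a b) := by
  classical
  induction F using Finset.induction_on generalizing a b with
  | empty =>
    simp only [Finset.coe_empty, sdiff_empty] at hd hf'
    refine monotoneOn_of_deriv_nonneg (convex_Icc a b) hf ?_ ?_ <;> rw [interior_Icc]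
    · exact fun x hx => (hd x hx).differentiableWithinAt
    · exact hf'
  | insert p F _ ih =>
    have hmem : ∀ x ∈ Ioo a b, x ≠ p → x ∉ F → x ∈ Ioo a b \ ↑(insert p F) :=
      fun x hx hxp hxF => ⟨hx, by simp [hxp, hxF]⟩
    by_cases hp : p ∈ Ioo a b
    · have hleft : ∀ x ∈ Ioo a p \ F, x ∈ Ioo a b \ ↑(insert p F) :=
        fun x hx => hmem x ⟨hx.1.1, hx.1.2.trans hp.2⟩ hx.1.2.ne hx.2
      have hright : ∀ x ∈ Ioo p b \ F, x ∈ Ioo a b \ ↑(insert p F) :=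
        fun x hx => hmem x ⟨hp.1.trans hx.1.1, hx.1.2⟩ hx.1.1.ne' hx.2
      rw [← Icc_union_Icc_eq_Icc hp.1.le hp.2.le]
      exact MonotoneOn.union_right
        (ih (hf.mono (Icc_subset_Icc_right hp.2.le)) (fun x hx => hd x (hleft x hx))
          (fun x hx => hf' x (hleft x hx)))
        (ih (hf.mono (Icc_subset_Icc_left hp.1.le)) (fun x hx => hd x (hright x hx))
          (fun x hx => hf' x (hright x hx)))
        (isGreatest_Icc hp.1.le) (isLeast_Icc hp.2.le)
    · have hsub : ∀ x ∈ Ioo a b \ F, x ∈ Ioo a b \ ↑(insert p F) :=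
        fun x hx => hmem x hx.1 (fun h => hp (h ▸ hx.1)) hx.2
      exact ih hf (fun x hx => hd x (hsub x hx)) (fun x hx => hf' x (hsub x hx))

lemma HasDerivAt.const_inner {E : Type*} [NormedAddCommGroup E] [InnerProductSpace ℝ E]
    {f : ℝ → E} {f' : E} {x : ℝ} (w : E) (hf : HasDerivAt f f' x) :
    HasDerivAt (fun t => ⟪w, f t⟫) ⟪w, f'⟫ x := by
  simpa using (hasDerivAt_const x w).inner ℝ hf

lemma deriv_eq_of_tendsto_deriv_nhdsGT {E : Type*} [NormedAddCommGroup E] [NormedSpace ℝ E]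
    {f : ℝ → E} {s : ℝ} {e : E} (hd : ∀ᶠ t in 𝓝[>] s, DifferentiableAt ℝ f t)
    (hs : DifferentiableAt ℝ f s) (he : Tendsto (deriv f) (𝓝[>] s) (𝓝 e)) : deriv f s = e :=
  (uniqueDiffWithinAt_Ici s).eq_deriv _ hs.hasDerivAt.hasDerivWithinAt <|
    hasDerivWithinAt_Ici_of_tendsto_deriv (fun _ ht => DifferentiableAt.differentiableWithinAt ht)
      hs.continuousAt.continuousWithinAt hd he

lemma strictMonoOn_of_injOn_of_deriv_pos {g : ℝ → ℝ} {a b s : ℝ}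
    (hg : ContinuousOn g (Icc a b)) (hinj : InjOn g (Icc a b)) (hs : s ∈ Ioo a b)
    (hpos : 0 < deriv g s) : StrictMonoOn g (Icc a b) := by
  refine (hg.strictMonoOn_of_injOn_Icc' (hs.1.trans hs.2).le hinj).resolve_right fun hanti => ?_
  have : deriv g s ≤ 0 := by
    rw [← derivWithin_of_isOpen isOpen_Ioo hs]
    exact (hanti.antitoneOn.mono Ioo_subset_Icc_self).derivWithin_nonpos
  linarith

lemma one_add_le_sq_add_of_gram {m x y : ℝ} (hm : 0 ≤ m) (hx : m ≤ x) (hy : m ≤ y)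
    (hx1 : x ≤ 1) (hy1 : y ≤ 1) (hgram : x ^ 2 + y ^ 2 + m ^ 2 = 1 + 2 * m * x * y) :
    1 + m ≤ (x + y) ^ 2 := by
  nlinarith [mul_nonneg (sub_nonneg.2 hx) (sub_nonneg.2 hy), mul_nonneg hm (sub_nonneg.2 hx1),
    mul_nonneg hm (sub_nonneg.2 hy1), mul_nonneg (sub_nonneg.2 hx1) (sub_nonneg.2 hy1)]

/-- The Gram determinant of three vectors in the plane vanishes. -/
lemma EuclideanSpace.gram_det_fin_two (a b c : EuclideanSpace ℝ (Fin 2)) :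
    ‖a‖ ^ 2 * ‖b‖ ^ 2 * ‖c‖ ^ 2 + 2 * ⟪a, b⟫ * ⟪a, c⟫ * ⟪b, c⟫
      = ‖a‖ ^ 2 * ⟪b, c⟫ ^ 2 + ‖b‖ ^ 2 * ⟪a, c⟫ ^ 2 + ‖c‖ ^ 2 * ⟪a, b⟫ ^ 2 := by
  simp only [EuclideanSpace.norm_sq_eq, EuclideanSpace.inner_eq_star_dotProduct,
    Fin.sum_univ_two, dotProduct, Real.norm_eq_abs, sq_abs, Pi.star_apply, star_trivial]
  ring

lemma EuclideanSpace.exists_inner_ge_of_pairwise_inner_nonneg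
    {S : Set (EuclideanSpace ℝ (Fin 2))} (hS : S ⊆ sphere 0 1)
    (hpair : ∀ x ∈ S, ∀ y ∈ S, 0 ≤ ⟪x, y⟫) :
    ∃ e : EuclideanSpace ℝ (Fin 2), ‖e‖ = 1 ∧ ∀ c ∈ S, 1 ≤ √2 * ⟪e, c⟫ := by
  -- The axis bisects a pair `a, b` of points of `closure S` at the largest angle; the vanishing
  -- Gram determinant of `a, b, c` then keeps every `c ∈ S` within `π / 4` of it.
  rcases S.eq_empty_or_nonempty with rfl | hSne
  · exact ⟨EuclideanSpace.single 0 1, by simp, by simp⟩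
  have hK : closure S ⊆ sphere 0 1 := closure_minimal hS isClosed_sphere
  have hpairK : closure S ×ˢ closure S ⊆ {p | 0 ≤ ⟪p.1, p.2⟫} := by
    rw [← closure_prod_eq]
    exact closure_minimal (fun p hp => hpair _ hp.1 _ hp.2)
      (isClosed_le continuous_const (continuous_fst.inner continuous_snd))
  have hKc : IsCompact (closure S) := (isCompact_sphere 0 1).of_isClosed_subset isClosed_closure hK
  obtain ⟨⟨a, b⟩, ⟨ha, hb⟩, hmin⟩ := (hKc.prod hKc).exists_isMinOn (hSne.closure.prod hSne.closure)
    (continuous_inner : Continuous fun p : EuclideanSpace ℝ (Fin 2) × _ => ⟪p.1, p.2⟫).continuousOn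
  have hnorm : ∀ x ∈ closure S, ‖x‖ = 1 := fun x hx => mem_sphere_zero_iff_norm.1 (hK hx)
  have hm : 0 ≤ ⟪a, b⟫ := hpairK ⟨ha, hb⟩
  have hab : ‖a + b‖ ^ 2 = 2 * (1 + ⟪a, b⟫) := by
    rw [norm_add_sq_real, hnorm a ha, hnorm b hb]; ring
  have hab0 : 0 < ‖a + b‖ := by nlinarith [norm_nonneg (a + b)]
  refine ⟨‖a + b‖⁻¹ • (a + b), by rw [norm_smul, norm_inv, norm_norm, inv_mul_cancel₀ hab0.ne'], ?_⟩
  intro c hc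
  have hcK : c ∈ closure S := subset_closure hc
  have hx : ⟪a, b⟫ ≤ ⟪a, c⟫ := isMinOn_iff.1 hmin (a, c) ⟨ha, hcK⟩
  have hy : ⟪a, b⟫ ≤ ⟪b, c⟫ := isMinOn_iff.1 hmin (b, c) ⟨hb, hcK⟩
  have hx1 : ⟪a, c⟫ ≤ 1 := by simpa [hnorm a ha, hnorm c hcK] using real_inner_le_norm a c
  have hy1 : ⟪b, c⟫ ≤ 1 := by simpa [hnorm b hb, hnorm c hcK] using real_inner_le_norm b c
  have hgram := EuclideanSpace.gram_det_fin_two a b c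
  rw [hnorm a ha, hnorm b hb, hnorm c hcK] at hgram
  have hsq := one_add_le_sq_add_of_gram hm hx hy hx1 hy1 (by linarith)
  have hsum : ‖a + b‖ ≤ √2 * (⟪a, c⟫ + ⟪b, c⟫) := by
    rw [← Real.sqrt_sq (norm_nonneg _), hab, ← Real.sqrt_sq (by linarith : 0 ≤ ⟪a, c⟫ + ⟪b, c⟫),
      ← Real.sqrt_mul zero_le_two]
    exact Real.sqrt_le_sqrt (by linarith)
  rw [real_inner_smul_left, inner_add_left, mul_left_comm, ← div_eq_inv_mul, le_div_iff₀ hab0]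
  linarith

lemma deriv_mem_tanCone {γ : ℝ → EuclideanSpace ℝ (Fin 2)} {s : ℝ}
    (hne : (TanCone γ s).Nonempty) (hd : ∀ᶠ t in 𝓝[>] s, DifferentiableAt ℝ γ t)
    (hs : DifferentiableAt ℝ γ s) : deriv γ s ∈ TanCone γ s := by
  obtain ⟨-, Γm, Γp, hm, hp, -⟩ := hne
  refine ⟨Γm, Γp, hm, hp, 0, 1, le_rfl, zero_le_one, by norm_num, ?_⟩
  rw [deriv_eq_of_tendsto_deriv_nhdsGT hd hs hp, zero_smul, one_smul, zero_add]

lemma TCGLAt.injOn_inner {Ω : Set (EuclideanSpace ℝ (Fin 2))} {γ : ℝ → EuclideanSpace ℝ (Fin 2)}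
    {r s : ℝ} {w : EuclideanSpace ℝ (Fin 2)} {I : Set ℝ} (hT : TCGLAt Ω γ r s)
    (hw : w ∈ TanCone γ s) (hI : MapsTo γ I (frontier Ω ∩ closedBall (γ s) r))
    (hinj : InjOn γ I) : InjOn (fun t => ⟪w, γ t⟫) I := by
  intro a ha b hb hab
  by_contra hne
  exact hT w hw _ (hI ha) _ (hI hb) (hinj.ne ha hb hne) (by rwa [inner_sub_right, sub_eq_zero])

lemma inner_deriv_nonneg_of_tcglAt {Ω : Set (EuclideanSpace ℝ (Fin 2))}
    {γ : ℝ → EuclideanSpace ℝ (Fin 2)} {F : Finset ℝ} {r a b s t : ℝ} (hcont : Continuous γ)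
    (hdiff : ∀ t, t ∉ F → DifferentiableAt ℝ γ t) (hfront : MapsTo γ (Icc a b) (frontier Ω))
    (hinj : InjOn γ (Icc a b)) (hdiam : ∀ x ∈ Icc a b, ∀ y ∈ Icc a b, dist (γ x) (γ y) < r)
    (hT : TCGLAt Ω γ r s) (hne : (TanCone γ s).Nonempty) (hs : s ∈ Ioo a b \ F)
    (hs0 : deriv γ s ≠ 0) (ht : t ∈ Ioo a b \ F) : 0 ≤ ⟪deriv γ s, deriv γ t⟫ := by
  have hder : ∀ x ∉ F, HasDerivAt (fun t => ⟪deriv γ s, γ t⟫) ⟪deriv γ s, deriv γ x⟫ x :=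
    fun x hx => (hdiff x hx).hasDerivAt.const_inner _
  have hnearF : ∀ᶠ x in 𝓝[>] s, x ∉ F :=
    (nhdsWithin_mono s fun _ h => ne_of_gt h).trans (nhdsNE_le_cofinite s)
      F.finite_toSet.compl_mem_cofinite
  have htan : deriv γ s ∈ TanCone γ s :=
    deriv_mem_tanCone hne (hnearF.mono hdiff) (hdiff s hs.2)
  have hball : MapsTo γ (Icc a b) (frontier Ω ∩ closedBall (γ s) r) := fun x hx =>
    ⟨hfront hx, mem_closedBall.2 (hdiam x hx s (Ioo_subset_Icc_self hs.1)).le⟩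
  have hmono : StrictMonoOn (fun t => ⟪deriv γ s, γ t⟫) (Icc a b) :=
    strictMonoOn_of_injOn_of_deriv_pos (continuous_const.inner hcont).continuousOn
      (hT.injOn_inner htan hball hinj) hs.1
      (by rw [(hder s hs.2).deriv, real_inner_self_eq_norm_sq]; positivity)
  rw [← (hder t ht.2).deriv, ← derivWithin_of_isOpen isOpen_Ioo ht.1]
  exact (hmono.monotoneOn.mono Ioo_subset_Icc_self).derivWithin_nonneg

theorem statement8_general
    (Ω : Set (EuclideanSpace ℝ (Fin 2)))
    (L : ℝ)
    (γ : ℝ → EuclideanSpace ℝ (Fin 2))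
    (hcont : Continuous γ)
    (himg : γ '' Set.Icc 0 L = frontier Ω)
    (hinj : Set.InjOn γ (Set.Ico 0 L))
    (F : Finset ℝ)
    (hdiff : ∀ t, t ∉ F → DifferentiableAt ℝ γ t)
    (harc : ∀ t, t ∉ F → ‖deriv γ t‖ = 1)
    (hTCne : ∀ t, (TanCone γ t).Nonempty)
    (r : ℝ)
    (hTCGL : ∀ s ∈ Set.Ico 0 L, TCGLAt Ω γ r s)
    -- the arc P = γ([t₁,t₂]) joins two points at distance < r and all pairs of its
    -- points are within distance < r of each other:
    (t₁ t₂ : ℝ) (ht₁ : t₁ ∈ Set.Ico 0 L) (ht₂ : t₂ ∈ Set.Ico 0 L)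
    (hdiam : ∀ a ∈ Set.Icc t₁ t₂, ∀ b ∈ Set.Icc t₁ t₂, dist (γ a) (γ b) < r) :
    ∀ u₁ ∈ Set.Icc t₁ t₂, ∀ u₂ ∈ Set.Icc t₁ t₂, u₁ ≤ u₂ →
      u₂ - u₁ ≤ Real.sqrt 2 * dist (γ u₁) (γ u₂) := by
  intro u₁ hu₁ u₂ hu₂ h12
  have hIcc : Icc t₁ t₂ ⊆ Ico 0 L := fun x hx => ⟨ht₁.1.trans hx.1, hx.2.trans_lt ht₂.2⟩
  have hsub : Ioo u₁ u₂ \ F ⊆ Ioo t₁ t₂ \ F := sdiff_subset_sdiff_left (Ioo_subset_Ioo hu₁.1 hu₂.2)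
  have hfront : MapsTo γ (Icc t₁ t₂) (frontier Ω) := fun x hx =>
    himg ▸ mem_image_of_mem γ (Ico_subset_Icc_self (hIcc hx))
  obtain ⟨e, he, hcone⟩ :=
    EuclideanSpace.exists_inner_ge_of_pairwise_inner_nonneg (S := deriv γ '' (Ioo u₁ u₂ \ F))
      (by rintro _ ⟨t, ht, rfl⟩; exact mem_sphere_zero_iff_norm.2 (harc t ht.2))
      (by
        rintro _ ⟨s, hs, rfl⟩ _ ⟨t, ht, rfl⟩
        exact inner_deriv_nonneg_of_tcglAt hcont hdiff hfront (hinj.mono hIcc) hdiam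
          (hTCGL s (hIcc (Ioo_subset_Icc_self (hsub hs).1))) (hTCne s) (hsub hs)
          (norm_ne_zero_iff.1 (by rw [harc s hs.2]; exact one_ne_zero)) (hsub ht))
  have hder : ∀ t ∉ F, HasDerivAt (fun t => √2 * ⟪e, γ t⟫ - t) (√2 * ⟪e, deriv γ t⟫ - 1) t :=
    fun t ht => (((hdiff t ht).hasDerivAt.const_inner e).const_mul √2).sub (hasDerivAt_id t)
  have hmono : MonotoneOn (fun t => √2 * ⟪e, γ t⟫ - t) (Icc u₁ u₂) :=
    monotoneOn_of_deriv_nonneg_off_finset F (by fun_prop)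
      (fun t ht => (hder t ht.2).differentiableAt)
      (fun t ht => by rw [(hder t ht.2).deriv]; linarith [hcone _ ⟨t, ht, rfl⟩])
  have hend := hmono (left_mem_Icc.2 h12) (right_mem_Icc.2 h12) h12
  calc u₂ - u₁ ≤ √2 * ⟪e, γ u₂ - γ u₁⟫ := by rw [inner_sub_right]; linarith
    _ ≤ √2 * dist (γ u₁) (γ u₂) := by
      gcongr
      simpa [he, dist_eq_norm'] using real_inner_le_norm e (γ u₂ - γ u₁)

/-- Arc length along a small boundary arc is at most `√2` times Euclidean distance. -/
theorem statement8
    (Ω : Set (EuclideanSpace ℝ (Fin 2))) (hΩ : IsCompact Ω)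
    (L : ℝ) (hL : 0 < L)
    (γ : ℝ → EuclideanSpace ℝ (Fin 2))
    (hcont : Continuous γ)
    (himg : γ '' Set.Icc 0 L = frontier Ω)
    (hclosed : γ 0 = γ L)
    (hinj : Set.InjOn γ (Set.Ico 0 L))
    (F : Finset ℝ)
    (hdiff : ∀ t, t ∉ F → DifferentiableAt ℝ γ t)
    (harc : ∀ t, t ∉ F → ‖deriv γ t‖ = 1)
    (hTCne : ∀ t, (TanCone γ t).Nonempty)
    (r : ℝ) (hr : 0 < r)
    (hTCGL : ∀ s ∈ Set.Ico 0 L, TCGLAt Ω γ r s)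
    -- the arc P = γ([t₁,t₂]) joins two points at distance < r and all pairs of its
    -- points are within distance < r of each other:
    (t₁ t₂ : ℝ) (ht₁ : t₁ ∈ Set.Ico 0 L) (ht₂ : t₂ ∈ Set.Ico 0 L) (ht12 : t₁ ≤ t₂)
    (hends : dist (γ t₁) (γ t₂) < r)
    (hdiam : ∀ a ∈ Set.Icc t₁ t₂, ∀ b ∈ Set.Icc t₁ t₂, dist (γ a) (γ b) < r) :
    ∀ u₁ ∈ Set.Icc t₁ t₂, ∀ u₂ ∈ Set.Icc t₁ t₂, u₁ ≤ u₂ →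
      u₂ - u₁ ≤ Real.sqrt 2 * dist (γ u₁) (γ u₂) :=
  statement8_general Ω L γ hcont himg hinj F hdiff harc hTCne r hTCGL t₁ t₂ ht₁ ht₂ hdiam
end
end

section
/- Suppose Ω is a region whose counterclockwise boundary satisfies, at a fixed point, the TGL condition for radius r, and suppose the quantities A = r(θ₂−θ₁) and B = r(sinθ₂ − sinθ₁) are known, where θ₁ ∈ (−π/2, π/2) and θ₂ ∈ (π/2, 3π/2). Then (θ₁, θ₂) is uniquely determined by (A, B): the map (θ₁,θ₂) ↦ (r(θ₂−θ₁), r(sinθ₂−sinθ₁)) is injective on (−π/2,π/2) × (π/2,3π/2). -/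
open Real Set

/- For a fixed arc length `d`, the map `θ ↦ sin (θ + d) - sin θ` has derivative
`cos (θ + d) - cos θ`, which is negative while `θ` lies in the right half-plane and `θ + d`
in the left one; so sliding the arc changes `sin θ₂ - sin θ₁` strictly monotonically. -/
lemma strictAntiOn_sin_add_sub_sin (d : ℝ) :
    StrictAntiOn (fun θ => sin (θ + d) - sin θ)
      (Ioo (-(π / 2)) (π / 2) ∩ Ioo (π / 2 - d) (3 * π / 2 - d)) := by
  have hopen : IsOpen (Ioo (-(π / 2)) (π / 2) ∩ Ioo (π / 2 - d) (3 * π / 2 - d)) :=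
    isOpen_Ioo.inter isOpen_Ioo
  refine strictAntiOn_of_deriv_neg ((convex_Ioo _ _).inter (convex_Ioo _ _))
    (by fun_prop) fun θ hθ => ?_
  rw [hopen.interior_eq] at hθ
  obtain ⟨⟨h₁, h₂⟩, h₃, h₄⟩ := hθ
  have hderiv : deriv (fun θ => sin (θ + d) - sin θ) θ = cos (θ + d) - cos θ :=
    (((hasDerivAt_id θ).add_const d).sin.sub (hasDerivAt_sin θ)).deriv.trans (by simp)
  rw [hderiv]
  have hcos : 0 < cos θ := cos_pos_of_mem_Ioo ⟨h₁, h₂⟩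
  have hcos_add : cos (θ + d) < 0 := cos_neg_of_pi_div_two_lt_of_lt (by linarith) (by linarith)
  linarith

/-- The map `(θ₁, θ₂) ↦ (r(θ₂−θ₁), r(sin θ₂ − sin θ₁))` is injective on
`(−π/2, π/2) × (π/2, 3π/2)`: the angles are uniquely determined by the two
first derivatives of the integral area invariant. -/
theorem statement13 (r : ℝ) (hr : 0 < r) :
    Set.InjOn (fun p : ℝ × ℝ => (r * (p.2 - p.1), r * (Real.sin p.2 - Real.sin p.1)))
      (Set.Ioo (-(π/2)) (π/2) ×ˢ Set.Ioo (π/2) (3*π/2)) := by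
  rintro ⟨a₁, a₂⟩ ⟨ha₁, ha₂⟩ ⟨b₁, b₂⟩ ⟨hb₁, hb₂⟩ h
  obtain ⟨hlen, hsin⟩ := Prod.mk.inj h
  have hd : b₂ - b₁ = a₂ - a₁ := (mul_left_cancel₀ hr.ne' hlen).symm
  have hsin' : sin a₂ - sin a₁ = sin b₂ - sin b₁ := mul_left_cancel₀ hr.ne' hsin
  have hmem : ∀ {θ₁ θ₂}, θ₁ ∈ Ioo (-(π / 2)) (π / 2) → θ₂ ∈ Ioo (π / 2) (3 * π / 2) →
      θ₂ - θ₁ = a₂ - a₁ →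
        θ₁ ∈ Ioo (-(π / 2)) (π / 2) ∩ Ioo (π / 2 - (a₂ - a₁)) (3 * π / 2 - (a₂ - a₁)) :=
    fun h₁ h₂ hθ => ⟨h₁, by linarith [h₂.1], by linarith [h₂.2]⟩
  have h₁ : a₁ = b₁ := (strictAntiOn_sin_add_sub_sin (a₂ - a₁)).injOn
    (hmem ha₁ ha₂ rfl) (hmem hb₁ hb₂ hd)
    (by simpa [show b₁ + (a₂ - a₁) = b₂ by linarith] using hsin')
  exact Prod.ext h₁ (by linarith)
end

section
/- For a disk of radius R, with g(s,r) = area(D ∩ D(γ(s),r)) the integral area invariant at a boundary point γ(s) of the disk, one has lim_{r→0} ∂/∂r [ g(s,r)/(πr²) ] = −1/(3πR). Equivalently, the curvature 1/R of the circle satisfies κ = −3π · lim_{r→0} ∂/∂r (g(s,r)/(πr²)). -/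
/-!
Put `γ(s)` at the origin and the centre of `D` at `(0, -R)`. The vertical slice of
`D ∩ D(γ(s), r)` over `x` is an interval of length `√(r² - x²) - (R - √(R² - x²))` for `|x| ≤ p`
and is empty for `|x| > p`, so integrating between `±p` gives the lens area
`A(r) = (π/2) r² + (2R² - r²) arcsin (r/2R) - (r/2) √(4R² - r²)`.
Since `A'(r) = π r - 2 r arcsin (r/2R)`, the derivative of `A(r)/(π r²)` is `N(r)/(π r³)` with
`N(r) = r A'(r) - 2 A(r) = r √(4R² - r²) - 4R² arcsin (r/2R)`. Now `N(0) = 0` and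
`N'(r) = -2r²/√(4R² - r²)`, so by l'Hôpital `N(r)/r³ → -2/(3 · 2R) = -1/(3R)`.
-/

open Metric Set Filter MeasureTheory Real Topology

lemma sqrt_one_sub_div_sq {a : ℝ} (ha : 0 < a) (x : ℝ) :
    √(1 - (x / a) ^ 2) = √(a ^ 2 - x ^ 2) / a := by
  rw [show 1 - (x / a) ^ 2 = (a ^ 2 - x ^ 2) / a ^ 2 by field_simp, sqrt_div' _ (sq_nonneg a),
    sqrt_sq ha.le]

lemma hasDerivAt_sqrt_sub_sq {a x : ℝ} (h : x ^ 2 < a) :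
    HasDerivAt (fun y => √(a - y ^ 2)) (-x / √(a - x ^ 2)) x := by
  refine (((hasDerivAt_pow 2 x).const_sub a).sqrt (by linarith)).congr_deriv ?_
  field_simp
  norm_num

lemma hasDerivAt_arcsin_div {a x : ℝ} (ha : 0 < a) (h : x ^ 2 < a ^ 2) :
    HasDerivAt (fun y => arcsin (y / a)) (1 / √(a ^ 2 - x ^ 2)) x := by
  have hx : |x / a| < 1 := by
    rw [← sq_lt_one_iff_abs_lt_one, div_pow, div_lt_one (by positivity)]
    exact h
  rw [abs_lt] at hx
  refine ((Real.hasDerivAt_arcsin hx.1.ne' hx.2.ne).comp x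
    ((hasDerivAt_id x).div_const a)).congr_deriv ?_
  rw [sqrt_one_sub_div_sq ha]
  have : 0 < √(a ^ 2 - x ^ 2) := sqrt_pos.2 (by linarith)
  field_simp

lemma hasDerivAt_primitive_sqrt_sq_sub_sq {a x : ℝ} (ha : 0 < a) (h : x ^ 2 < a ^ 2) :
    HasDerivAt (fun y => (y * √(a ^ 2 - y ^ 2) + a ^ 2 * arcsin (y / a)) / 2)
      √(a ^ 2 - x ^ 2) x := by
  have hs : 0 < √(a ^ 2 - x ^ 2) := sqrt_pos.2 (by linarith)
  have hs2 : √(a ^ 2 - x ^ 2) ^ 2 = a ^ 2 - x ^ 2 := sq_sqrt (by linarith)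
  refine ((((hasDerivAt_id x).mul (hasDerivAt_sqrt_sub_sq h)).add
    ((hasDerivAt_arcsin_div ha h).const_mul (a ^ 2))).div_const 2).congr_deriv ?_
  field_simp
  simp only [id_eq]
  linear_combination -hs2

lemma arcsin_sqrt_one_sub_sq {t : ℝ} (ht : 0 ≤ t) : arcsin √(1 - t ^ 2) = π / 2 - arcsin t := by
  rw [← arccos_eq_arcsin ht, arccos_eq_pi_div_two_sub_arcsin]

lemma arcsin_two_mul_mul_sqrt_one_sub_sq {t : ℝ} (ht : |t| ≤ √2 / 2) :
    arcsin (2 * t * √(1 - t ^ 2)) = 2 * arcsin t := by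
  have hπ := pi_pos
  have h2 : √2 / 2 ≤ 1 := by nlinarith [sq_sqrt (zero_le_two (α := ℝ)), sqrt_nonneg 2]
  rw [abs_le] at ht
  have hle : arcsin t ≤ π / 4 :=
    (arcsin_le_iff_le_sin' ⟨by linarith, by linarith⟩).2 (sin_pi_div_four ▸ ht.2)
  have hge : -(π / 4) ≤ arcsin t :=
    (le_arcsin_iff_sin_le' ⟨by linarith, by linarith⟩).2
      (by rw [sin_neg, sin_pi_div_four]; exact ht.1)
  have hsin : 2 * t * √(1 - t ^ 2) = sin (2 * arcsin t) := by
    rw [sin_two_mul, sin_arcsin (by linarith) (by linarith), cos_arcsin]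
  rw [hsin, arcsin_sin (by linarith) (by linarith)]

/-- `D ∩ D(γ(s), r)` in coordinates where `γ(s) = 0` and `D` is centred at `(0, -R)`. -/
def lens (R r : ℝ) : Set (ℝ × ℝ) :=
  {z | z.1 ^ 2 + (z.2 + R) ^ 2 ≤ R ^ 2 ∧ z.1 ^ 2 + z.2 ^ 2 ≤ r ^ 2}

noncomputable def lensHeight (R r x : ℝ) : ℝ := √(r ^ 2 - x ^ 2) - (R - √(R ^ 2 - x ^ 2))

/-- The paper's `p`: the abscissa where the two boundary circles meet. -/
noncomputable def halfChord (R r : ℝ) : ℝ := r * √(4 * R ^ 2 - r ^ 2) / (2 * R)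

/-- `r² α + R² β - R p`, where `α = arccos (r/2R)` and `β = 2 arcsin (r/2R)` are the half-angles of
the two circular sectors making up the lens. -/
noncomputable def lensArea (R r : ℝ) : ℝ :=
  π / 2 * r ^ 2 + (2 * R ^ 2 - r ^ 2) * arcsin (r / (2 * R)) - r * √(4 * R ^ 2 - r ^ 2) / 2

/-- `r A'(r) - 2 A(r)` for `A = lensArea R`. -/
noncomputable def lensDefect (R r : ℝ) : ℝ :=
  r * √(4 * R ^ 2 - r ^ 2) - 4 * R ^ 2 * arcsin (r / (2 * R))

section Lens

variable {R r : ℝ}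

lemma halfChord_sq (hR : 0 < R) (hr : 0 ≤ r) (hrR : r ≤ R) :
    halfChord R r ^ 2 = r ^ 2 * (4 * R ^ 2 - r ^ 2) / (4 * R ^ 2) := by
  rw [halfChord, div_pow, mul_pow, sq_sqrt (by nlinarith)]
  ring

lemma sqrt_sq_sub_halfChord_sq_right (hR : 0 < R) (hr : 0 ≤ r) (hrR : r ≤ R) :
    √(r ^ 2 - halfChord R r ^ 2) = r ^ 2 / (2 * R) := by
  rw [halfChord_sq hR hr hrR, show r ^ 2 - r ^ 2 * (4 * R ^ 2 - r ^ 2) / (4 * R ^ 2)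
    = (r ^ 2 / (2 * R)) ^ 2 by field_simp; ring, sqrt_sq (by positivity)]

lemma sqrt_sq_sub_halfChord_sq_left (hR : 0 < R) (hr : 0 ≤ r) (hrR : r ≤ R) :
    √(R ^ 2 - halfChord R r ^ 2) = (2 * R ^ 2 - r ^ 2) / (2 * R) := by
  rw [halfChord_sq hR hr hrR, show R ^ 2 - r ^ 2 * (4 * R ^ 2 - r ^ 2) / (4 * R ^ 2)
    = ((2 * R ^ 2 - r ^ 2) / (2 * R)) ^ 2 by field_simp; ring,
    sqrt_sq (div_nonneg (by nlinarith) (by positivity))]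

lemma halfChord_sq_lt (hR : 0 < R) (hr : 0 < r) (hrR : r ≤ R) : halfChord R r ^ 2 < r ^ 2 := by
  rw [halfChord_sq hR hr.le hrR, div_lt_iff₀ (by positivity)]
  nlinarith [pow_pos hr 4]

lemma lensHeight_halfChord (hR : 0 < R) (hr : 0 ≤ r) (hrR : r ≤ R) :
    lensHeight R r (halfChord R r) = 0 := by
  rw [lensHeight, sqrt_sq_sub_halfChord_sq_right hR hr hrR,
    sqrt_sq_sub_halfChord_sq_left hR hr hrR]
  field_simp
  ring

lemma lensHeight_le_of_sq_le {x y : ℝ} (h : x ^ 2 ≤ y ^ 2) :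
    lensHeight R r y ≤ lensHeight R r x := by
  unfold lensHeight
  gcongr

lemma continuous_lensHeight : Continuous (lensHeight R r) := by
  unfold lensHeight
  fun_prop

lemma lensHeight_nonneg (hR : 0 < R) (hr : 0 ≤ r) (hrR : r ≤ R) {x : ℝ}
    (hx : x ^ 2 ≤ halfChord R r ^ 2) : 0 ≤ lensHeight R r x :=
  lensHeight_halfChord hR hr hrR ▸ lensHeight_le_of_sq_le hx

lemma lensHeight_nonpos (hR : 0 < R) (hr : 0 ≤ r) (hrR : r ≤ R) {x : ℝ}
    (hx : halfChord R r ^ 2 ≤ x ^ 2) : lensHeight R r x ≤ 0 :=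
  lensHeight_halfChord hR hr hrR ▸ lensHeight_le_of_sq_le hx

lemma sqrt_one_sub_div_two_mul_sq (hR : 0 < R) :
    √(1 - (r / (2 * R)) ^ 2) = √(4 * R ^ 2 - r ^ 2) / (2 * R) := by
  rw [sqrt_one_sub_div_sq (by positivity), mul_pow]
  norm_num

lemma arcsin_halfChord_div_right (hR : 0 < R) (hr : 0 < r) :
    arcsin (halfChord R r / r) = π / 2 - arcsin (r / (2 * R)) := by
  rw [← arcsin_sqrt_one_sub_sq (by positivity), sqrt_one_sub_div_two_mul_sq hR, halfChord]
  field_simp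

lemma arcsin_halfChord_div_left (hR : 0 < R) (hr : 0 ≤ r) (hrR : r ≤ R) :
    arcsin (halfChord R r / R) = 2 * arcsin (r / (2 * R)) := by
  have ht : |r / (2 * R)| ≤ √2 / 2 := by
    rw [abs_of_nonneg (by positivity), div_le_div_iff₀ (by positivity) two_pos]
    nlinarith [sq_sqrt (zero_le_two (α := ℝ)), sqrt_nonneg 2]
  rw [← arcsin_two_mul_mul_sqrt_one_sub_sq ht, sqrt_one_sub_div_two_mul_sq hR, halfChord]
  field_simp

lemma hasDerivAt_primitive_lensHeight (hR : 0 < R) (hr : 0 < r) {x : ℝ}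
    (hxR : x ^ 2 < R ^ 2) (hxr : x ^ 2 < r ^ 2) :
    HasDerivAt (fun y => (y * √(R ^ 2 - y ^ 2) + R ^ 2 * arcsin (y / R)) / 2
      + (y * √(r ^ 2 - y ^ 2) + r ^ 2 * arcsin (y / r)) / 2 - R * y) (lensHeight R r x) x := by
  refine (((hasDerivAt_primitive_sqrt_sq_sub_sq hR hxR).add
    (hasDerivAt_primitive_sqrt_sq_sub_sq hr hxr)).sub
    ((hasDerivAt_id x).const_mul R)).congr_deriv ?_
  simp only [lensHeight]
  ring

lemma integral_lensHeight (hR : 0 < R) (hr : 0 < r) (hrR : r ≤ R) :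
    ∫ x in -halfChord R r..halfChord R r, lensHeight R r x = lensArea R r := by
  have hq0 : 0 ≤ halfChord R r := by unfold halfChord; positivity
  have hqr : halfChord R r ^ 2 < r ^ 2 := halfChord_sq_lt hR hr hrR
  have hqR : halfChord R r ^ 2 < R ^ 2 := hqr.trans_le (by gcongr)
  rw [intervalIntegral.integral_eq_sub_of_hasDerivAt (fun x hx => by
      rw [uIcc_of_le (by linarith)] at hx
      have hxq : x ^ 2 ≤ halfChord R r ^ 2 := sq_le_sq' hx.1 hx.2
      exact hasDerivAt_primitive_lensHeight hR hr (hxq.trans_lt hqR) (hxq.trans_lt hqr))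
    (continuous_lensHeight.intervalIntegrable _ _)]
  simp only [neg_sq, neg_div, arcsin_neg]
  rw [sqrt_sq_sub_halfChord_sq_left hR hr.le hrR, sqrt_sq_sub_halfChord_sq_right hR hr.le hrR,
    arcsin_halfChord_div_right hR hr, arcsin_halfChord_div_left hR hr.le hrR, halfChord, lensArea]
  field_simp
  ring

lemma lensArea_nonneg (hR : 0 < R) (hr : 0 < r) (hrR : r ≤ R) : 0 ≤ lensArea R r := by
  rw [← integral_lensHeight hR hr hrR]
  have hq0 : 0 ≤ halfChord R r := by unfold halfChord; positivity
  exact intervalIntegral.integral_nonneg (by linarith) fun x hx =>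
    lensHeight_nonneg hR hr.le hrR (sq_le_sq' hx.1 hx.2)

lemma volume_lens_slice (hR : 0 < R) (hr : 0 ≤ r) (hrR : r ≤ R) (x : ℝ) :
    volume (Prod.mk x ⁻¹' lens R r) = ENNReal.ofReal (lensHeight R r x) := by
  have hsqrtR : √(R ^ 2 - x ^ 2) ≤ R := sqrt_le_iff.2 ⟨hR.le, by linarith [sq_nonneg x]⟩
  rcases le_or_gt (x ^ 2) (r ^ 2) with hx | hx
  · have hxR : x ^ 2 ≤ R ^ 2 := hx.trans (by gcongr)
    have hslice : Prod.mk x ⁻¹' lens R r = Icc (-√(r ^ 2 - x ^ 2)) (√(R ^ 2 - x ^ 2) - R) := by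
      ext y
      have hy := Real.sq_le (x := y) (sub_nonneg.2 hx)
      have hyR := Real.sq_le (x := y + R) (sub_nonneg.2 hxR)
      have hsqrtr : √(r ^ 2 - x ^ 2) ≤ r := sqrt_le_iff.2 ⟨by linarith, by linarith [sq_nonneg x]⟩
      simp only [mem_preimage, lens, mem_ofPred_eq, mem_Icc]
      constructor
      · rintro ⟨hin, hin'⟩
        exact ⟨(hy.1 (by linarith)).1, by linarith [(hyR.1 (by linarith)).2]⟩
      · rintro ⟨h₁, h₂⟩
        exact ⟨by linarith [hyR.2 ⟨by linarith, by linarith⟩],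
          by linarith [hy.2 ⟨h₁, by linarith [sqrt_nonneg (R ^ 2 - x ^ 2)]⟩]⟩
    rw [hslice, Real.volume_Icc, lensHeight]
    ring_nf
  · have hempty : Prod.mk x ⁻¹' lens R r = ∅ := by
      ext y
      simp only [mem_preimage, lens, mem_ofPred_eq, mem_empty_iff_false, iff_false, not_and]
      intro _
      nlinarith [sq_nonneg y]
    rw [hempty, measure_empty, eq_comm, ENNReal.ofReal_eq_zero, lensHeight,
      sqrt_eq_zero'.2 (by linarith)]
    linarith

lemma lintegral_ofReal_lensHeight (hR : 0 < R) (hr : 0 < r) (hrR : r ≤ R) :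
    ∫⁻ x, ENNReal.ofReal (lensHeight R r x) = ENNReal.ofReal (lensArea R r) := by
  set q := halfChord R r
  have hq0 : 0 ≤ q := by unfold q halfChord; positivity
  have hsupp : (fun x => ENNReal.ofReal (lensHeight R r x)).support ⊆ Icc (-q) q := by
    intro x hx
    by_contra hxq
    have hqx : q ^ 2 ≤ x ^ 2 := by
      rw [mem_Icc, not_and_or, not_le, not_le] at hxq
      rcases hxq with h | h <;> nlinarith
    exact hx (ENNReal.ofReal_eq_zero.2 (lensHeight_nonpos hR hr.le hrR hqx))
  rw [← setLIntegral_eq_of_support_subset hsupp, ← ofReal_integral_eq_lintegral_ofReal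
    (continuous_lensHeight.integrableOn_Icc)
    (ae_restrict_of_forall_mem measurableSet_Icc fun x hx =>
      lensHeight_nonneg hR hr.le hrR (sq_le_sq' hx.1 hx.2)),
    integral_Icc_eq_integral_Ioc, ← intervalIntegral.integral_of_le (by linarith),
    integral_lensHeight hR hr hrR]

lemma measurableSet_lens (R r : ℝ) : MeasurableSet (lens R r) := by
  unfold lens
  rw [ofPred_and]
  exact (measurableSet_le (by fun_prop) measurable_const).inter
    (measurableSet_le (by fun_prop) measurable_const)

lemma volume_lens (hR : 0 < R) (hr : 0 < r) (hrR : r ≤ R) :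
    volume (lens R r) = ENNReal.ofReal (lensArea R r) := by
  rw [Measure.volume_eq_prod, Measure.prod_apply (measurableSet_lens R r)]
  simp_rw [volume_lens_slice hR hr.le hrR]
  exact lintegral_ofReal_lensHeight hR hr hrR

end Lens

lemma volume_closedBall_inter_closedBall_congr {E : Type*} [NormedAddCommGroup E]
    [InnerProductSpace ℝ E] [FiniteDimensional ℝ E] [MeasurableSpace E] [BorelSpace E]
    {c p c' p' : E} (h : dist p c = dist p' c') (R r : ℝ) :
    volume (closedBall c R ∩ closedBall p r) = volume (closedBall c' R ∩ closedBall p' r) := by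
  set e := Submodule.reflection (ℝ ∙ ((c - p) - (c' - p')))ᗮ
  have he : e (c - p) = c' - p' := by
    refine Submodule.reflection_sub ?_
    rw [← dist_eq_norm, ← dist_eq_norm, dist_comm, h, dist_comm]
  set f : E → E := fun x => e (x - p) + p'
  have hf : MeasurePreserving f volume volume :=
    (measurePreserving_add_right volume p').comp
      (e.measurePreserving.comp (measurePreserving_sub_right volume p))
  have hf_dist : ∀ x y, dist (f x) (f y) = dist x y := fun x y => by
    simp [f, e.dist_map]
  have hfc : f c = c' := by simp only [f, he, sub_add_cancel]
  have hfp : f p = p' := by simp [f]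
  have hpre : f ⁻¹' (closedBall c' R ∩ closedBall p' r) = closedBall c R ∩ closedBall p r := by
    ext x
    simp only [mem_preimage, mem_inter_iff, mem_closedBall, ← hfc, ← hfp, hf_dist]
  rw [← hpre, hf.measure_preimage
    (measurableSet_closedBall.inter measurableSet_closedBall).nullMeasurableSet]

lemma volume_closedBall_inter_closedBall_of_dist_eq {c p : EuclideanSpace ℝ (Fin 2)} {R r : ℝ}
    (hR : 0 < R) (hr : 0 < r) (hrR : r ≤ R) (hp : dist p c = R) :
    volume (closedBall c R ∩ closedBall p r) = ENNReal.ofReal (lensArea R r) := by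
  set c' : EuclideanSpace ℝ (Fin 2) := !₂[0, -R]
  have hc' : dist 0 c' = R := by simp [EuclideanSpace.dist_eq, c', sqrt_sq hR.le]
  rw [volume_closedBall_inter_closedBall_congr (hp.trans hc'.symm) R r]
  have hmp : MeasurePreserving (fun x : EuclideanSpace ℝ (Fin 2) =>
      MeasurableEquiv.finTwoArrow (WithLp.ofLp x)) volume volume :=
    (volume_preserving_finTwoArrow ℝ).comp (PiLp.volume_preserving_ofLp (Fin 2))
  have hpre : closedBall c' R ∩ closedBall 0 r
      = (fun x => MeasurableEquiv.finTwoArrow (WithLp.ofLp x)) ⁻¹' lens R r := by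
    ext x
    simp [EuclideanSpace.dist_eq, EuclideanSpace.norm_eq, c', lens, sqrt_le_iff, hR.le, hr.le,
      Real.dist_eq, sq_abs]
  rw [hpre, hmp.measure_preimage (measurableSet_lens R r).nullMeasurableSet, volume_lens hR hr hrR]

section Derivative

variable {R r : ℝ}

lemma hasDerivAt_lensArea (hR : 0 < R) (hr : r ^ 2 < 4 * R ^ 2) :
    HasDerivAt (lensArea R) (π * r - 2 * r * arcsin (r / (2 * R))) r := by
  have hs : 0 < √(4 * R ^ 2 - r ^ 2) := sqrt_pos.2 (by linarith)
  have hs2 : √(4 * R ^ 2 - r ^ 2) ^ 2 = 4 * R ^ 2 - r ^ 2 := sq_sqrt (by linarith)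
  have harcsin := hasDerivAt_arcsin_div (by positivity : 0 < 2 * R) (x := r) (by linarith)
  rw [mul_pow, show (2 : ℝ) ^ 2 = 4 by norm_num] at harcsin
  refine ((((hasDerivAt_pow 2 r).const_mul (π / 2)).add
    (((hasDerivAt_pow 2 r).const_sub (2 * R ^ 2)).mul harcsin)).sub
    (((hasDerivAt_id r).mul (hasDerivAt_sqrt_sub_sq hr)).div_const 2)).congr_deriv ?_
  generalize √(4 * R ^ 2 - r ^ 2) = s at hs hs2 ⊢
  field_simp
  simp only [id_eq]
  linear_combination -hs2

lemma hasDerivAt_lensArea_div_sq (hR : 0 < R) (hr : r ≠ 0) (hr2 : r ^ 2 < 4 * R ^ 2) :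
    HasDerivAt (fun ρ => lensArea R ρ / (π * ρ ^ 2)) (lensDefect R r / r ^ 3 / π) r := by
  refine ((hasDerivAt_lensArea hR hr2).div ((hasDerivAt_pow 2 r).const_mul π)
    (by positivity)).congr_deriv ?_
  rw [lensArea, lensDefect]
  field_simp
  ring

lemma hasDerivAt_lensDefect (hR : 0 < R) (hr : r ^ 2 < 4 * R ^ 2) :
    HasDerivAt (lensDefect R) (-(2 * r ^ 2 / √(4 * R ^ 2 - r ^ 2))) r := by
  have hs : 0 < √(4 * R ^ 2 - r ^ 2) := sqrt_pos.2 (by linarith)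
  have hs2 : √(4 * R ^ 2 - r ^ 2) ^ 2 = 4 * R ^ 2 - r ^ 2 := sq_sqrt (by linarith)
  have harcsin := hasDerivAt_arcsin_div (by positivity : 0 < 2 * R) (x := r) (by linarith)
  rw [mul_pow, show (2 : ℝ) ^ 2 = 4 by norm_num] at harcsin
  refine (((hasDerivAt_id r).mul (hasDerivAt_sqrt_sub_sq hr)).sub
    (harcsin.const_mul (4 * R ^ 2))).congr_deriv ?_
  field_simp
  simp only [id_eq]
  linear_combination hs2

lemma tendsto_lensDefect_div_cube (hR : 0 < R) :
    Tendsto (fun r => lensDefect R r / r ^ 3) (𝓝[>] 0) (𝓝 (-1 / (3 * R))) := by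
  have hsqrt0 : √(4 * R ^ 2 - 0 ^ 2) = 2 * R := by
    rw [show 4 * R ^ 2 - 0 ^ 2 = (2 * R) ^ 2 by ring, sqrt_sq (by positivity)]
  refine HasDerivAt.lhopital_zero_right_on_Ioo (by positivity : (0 : ℝ) < 2 * R)
    (fun x hx => hasDerivAt_lensDefect hR (by nlinarith [hx.1, hx.2]))
    (g' := fun x => 3 * x ^ 2) (fun x _ => by simpa using hasDerivAt_pow 3 x)
    (fun x hx => by have := hx.1; positivity) ?_ ?_ ?_
  · have hcont : Continuous (lensDefect R) := by unfold lensDefect; fun_prop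
    simpa [lensDefect] using hcont.continuousWithinAt (s := Ioi 0) (x := 0) |>.tendsto
  · simpa using (continuous_pow 3).continuousWithinAt (s := Ioi (0 : ℝ)) (x := 0) |>.tendsto
  · have hcont : ContinuousAt (fun x => -2 / (3 * √(4 * R ^ 2 - x ^ 2))) 0 :=
      continuousAt_const.div (by fun_prop) (by rw [hsqrt0]; positivity)
    have hlim := hcont.tendsto.mono_left (nhdsWithin_le_nhds (s := Ioi 0))
    rw [hsqrt0, show -2 / (3 * (2 * R)) = -1 / (3 * R) by field_simp] at hlim
    refine hlim.congr' ?_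
    filter_upwards [self_mem_nhdsWithin] with x (hx : 0 < x)
    field_simp

end Derivative

/-- For a disk of radius `R`, the normalized nonasymptotic density at a boundary point
satisfies `lim_{r→0} ∂/∂r [g(s,r)/(πr²)] = −1/(3πR)`, i.e. the curvature `1/R` equals
`−3π` times this limit. -/
theorem statement14
    (R : ℝ) (hR : 0 < R)
    (c p : EuclideanSpace ℝ (Fin 2)) (hp : p ∈ sphere c R) :
    Tendsto
      (fun r => deriv
        (fun ρ => (volume (closedBall c R ∩ closedBall p ρ)).toReal / (π * ρ ^ 2)) r)
      (nhdsWithin 0 (Set.Ioi 0)) (nhds (-1 / (3 * π * R))) := by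
  have hdensity : ∀ ρ ∈ Ioo 0 R, (volume (closedBall c R ∩ closedBall p ρ)).toReal / (π * ρ ^ 2)
      = lensArea R ρ / (π * ρ ^ 2) := fun ρ hρ => by
    rw [volume_closedBall_inter_closedBall_of_dist_eq hR hρ.1 hρ.2.le (mem_sphere.1 hp),
      ENNReal.toReal_ofReal (lensArea_nonneg hR hρ.1 hρ.2.le)]
  have hderiv : (fun r => deriv
      (fun ρ => (volume (closedBall c R ∩ closedBall p ρ)).toReal / (π * ρ ^ 2)) r)
      =ᶠ[𝓝[>] 0] fun r => lensDefect R r / r ^ 3 / π := by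
    filter_upwards [Ioo_mem_nhdsGT hR] with r hr
    rw [EventuallyEq.deriv_eq (eventually_of_mem (isOpen_Ioo.mem_nhds hr) hdensity),
      (hasDerivAt_lensArea_div_sq hR hr.1.ne' (by nlinarith [hr.1, hr.2])).deriv]
  refine Tendsto.congr' hderiv.symm ?_
  convert (tendsto_lensDefect_div_cube hR).div_const π using 2
  field_simp
end
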